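/- arXiv:2012.12945 — 2 statements merged into one kernel-verified Lean document; each statement's English description precedes it below -/
import Mathlib

section
/- In the one-dimensional Almgren-Chriss problem with Lagrangian L(q,v) = (λ/2)v² + (κσ²/2)q², the unique minimizer of ∫₀ᵀ L(q(t), q̇(t)) dt over C² paths with q(0)=q₀ and q(T)=0 is q*(t) = q₀ · sinh(γ(T−t))/sinh(γT), where γ = √(κσ²/λ). -/
open Real intervalIntegral MeasureTheory

/-!
Write `J(q) = ∫₀ᵀ (a/2) q'² + (b/2) q²`. The profile `q*` solves the Euler–Lagrange equation
`a q*'' = b q*`, so for `h = q - q*` the cross term `a q*' h' + b q* h` of the expansion of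
`J(q* + h)` is the derivative of `a q*' h`, which vanishes at both ends since `h(0) = h(T) = 0`.
Hence `J(q) = J(q*) + J(h) ≥ J(q*)`, and equality forces the continuous nonnegative integrand of
`J(h)` to vanish, so `h = 0` because `b > 0`.
-/

noncomputable def quadraticAction (a b T : ℝ) (q : ℝ → ℝ) : ℝ :=
  ∫ t in (0:ℝ)..T, (a/2) * (deriv q t)^2 + (b/2) * (q t)^2

theorem eqOn_zero_of_intervalIntegral_eq_zero {f : ℝ → ℝ} {a b : ℝ} (hab : a < b)
    (hf : Continuous f) (hf0 : ∀ t, 0 ≤ f t) (h : ∫ t in a..b, f t = 0) :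
    Set.EqOn f 0 (Set.Icc a b) := by
  have hIoc : f =ᵐ[volume.restrict (Set.Ioc a b)] 0 :=
    (integral_eq_zero_iff_of_le_of_nonneg_ae hab.le (.of_forall hf0)
      (hf.intervalIntegrable a b)).mp h
  rw [Measure.restrict_congr_set Ioc_ae_eq_Icc] at hIoc
  exact Measure.eqOn_Icc_of_ae_eq volume hab.ne hIoc hf.continuousOn continuousOn_const

section QuadraticAction

variable {a b T : ℝ}

theorem quadraticAction_nonneg (ha : 0 ≤ a) (hb : 0 ≤ b) (hT : 0 ≤ T) (q : ℝ → ℝ) :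
    0 ≤ quadraticAction a b T q :=
  integral_nonneg hT fun _ _ => by positivity

theorem eqOn_zero_of_quadraticAction_eq_zero (ha : 0 ≤ a) (hb : 0 < b) (hT : 0 < T)
    {r : ℝ → ℝ} (hr : ContDiff ℝ 1 r) (h : quadraticAction a b T r = 0) :
    Set.EqOn r 0 (Set.Icc 0 T) := by
  have hcont : Continuous fun t => (a/2) * (deriv r t)^2 + (b/2) * (r t)^2 := by
    have hr' := hr.continuous_deriv le_rfl
    have hr0 := hr.continuous
    fun_prop
  intro t ht
  have hzero := eqOn_zero_of_intervalIntegral_eq_zero hT hcont (fun _ => by positivity) h ht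
  have hsq : (b/2) * (r t)^2 = 0 :=
    ((add_eq_zero_iff_of_nonneg (by positivity) (by positivity)).mp hzero).2
  simpa [hb.ne'] using hsq

theorem quadraticAction_eq_add_of_hasDerivAt {p q : ℝ → ℝ} (hp : ContDiff ℝ 1 p)
    (hq : ContDiff ℝ 1 q) (hEL : ∀ t, HasDerivAt (fun s => a * deriv p s) (b * p t) t)
    (h0 : q 0 = p 0) (hT : q T = p T) :
    quadraticAction a b T q = quadraticAction a b T p + quadraticAction a b T (q - p) := by
  have hpd := hp.differentiable one_ne_zero
  have hqd := hq.differentiable one_ne_zero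
  have hp' := hp.continuous_deriv le_rfl
  have hq' := hq.continuous_deriv le_rfl
  have hp0 := hp.continuous
  have hq0 := hq.continuous
  have hderiv_sub : deriv (q - p) = deriv q - deriv p := by
    funext t; exact deriv_sub (hqd t) (hpd t)
  set B : ℝ → ℝ := fun t => a * deriv p t * (deriv q t - deriv p t) + b * p t * (q t - p t)
  have hB : ∀ t, HasDerivAt (fun s => a * deriv p s * (q s - p s)) (B t) t := fun t => by
    refine ((hEL t).mul ((hqd t).hasDerivAt.sub (hpd t).hasDerivAt)).congr_deriv ?_
    simp only [B, Pi.sub_apply]; ring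
  have hintB : ∫ t in (0:ℝ)..T, B t = 0 := by
    rw [integral_eq_sub_of_hasDerivAt (fun t _ => hB t)
      ((by fun_prop : Continuous B).intervalIntegrable _ _)]
    simp [h0, hT]
  unfold quadraticAction
  calc ∫ t in (0:ℝ)..T, (a/2) * (deriv q t)^2 + (b/2) * (q t)^2
      = ∫ t in (0:ℝ)..T, ((a/2) * (deriv p t)^2 + (b/2) * (p t)^2 + B t)
          + ((a/2) * (deriv (q - p) t)^2 + (b/2) * ((q - p) t)^2) := by
        congr 1; funext t
        simp only [hderiv_sub, Pi.sub_apply, B]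
        ring
    _ = _ := by
        rw [intervalIntegral.integral_add, intervalIntegral.integral_add, hintB, add_zero]
        all_goals
          apply Continuous.intervalIntegrable
          try simp only [hderiv_sub, Pi.sub_apply]
          fun_prop

end QuadraticAction

section SinhProfile

variable (A γ T : ℝ)

theorem hasDerivAt_mul_const_sub (t : ℝ) : HasDerivAt (fun s => γ * (T - s)) (-γ) t := by
  simpa using ((hasDerivAt_id t).const_sub T).const_mul γ

theorem hasDerivAt_sinh_profile (t : ℝ) :
    HasDerivAt (fun s => A * sinh (γ * (T - s))) (-(A * γ) * cosh (γ * (T - t))) t :=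
  (((hasDerivAt_sinh _).comp t (hasDerivAt_mul_const_sub γ T t)).const_mul A).congr_deriv
    (by ring)

theorem deriv_sinh_profile :
    deriv (fun s => A * sinh (γ * (T - s))) = fun t => -(A * γ) * cosh (γ * (T - t)) :=
  funext fun t => (hasDerivAt_sinh_profile A γ T t).deriv

theorem sinh_profile_euler_lagrange (a t : ℝ) :
    HasDerivAt (fun s => a * deriv (fun s => A * sinh (γ * (T - s))) s)
      (a * γ ^ 2 * (A * sinh (γ * (T - t)))) t := by
  rw [deriv_sinh_profile]
  have hcosh := (hasDerivAt_cosh _).comp t (hasDerivAt_mul_const_sub γ T t)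
  exact ((hcosh.const_mul (-(A * γ))).const_mul a).congr_deriv (by ring)

end SinhProfile

/-- In the 1-D Almgren-Chriss problem with Lagrangian `L(q,v) = (λ/2)v² + (κσ²/2)q²`, the
unique minimizer of `∫₀ᵀ L(q,q̇)` over C² paths with `q(0)=q₀`, `q(T)=0` is
`q*(t) = q₀ sinh(γ(T−t))/sinh(γT)`, `γ = √(κσ²/λ)`. -/
theorem stmt4 (lam κ σ T q0 : ℝ) (hlam : 0 < lam) (hκ : 0 < κ) (hσ : 0 < σ) (hT : 0 < T)
    (γ : ℝ) (hγ : γ = Real.sqrt (κ * σ^2 / lam))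
    (qstar : ℝ → ℝ)
    (hqstar : ∀ t, qstar t = q0 * Real.sinh (γ * (T - t)) / Real.sinh (γ * T)) :
    qstar 0 = q0 ∧ qstar T = 0 ∧ ContDiff ℝ 2 qstar ∧
    ∀ q : ℝ → ℝ, ContDiff ℝ 2 q → q 0 = q0 → q T = 0 →
      ((∫ t in (0:ℝ)..T, (lam/2) * (deriv qstar t)^2 + (κ * σ^2/2) * (qstar t)^2) ≤
        ∫ t in (0:ℝ)..T, (lam/2) * (deriv q t)^2 + (κ * σ^2/2) * (q t)^2) ∧
      ((∫ t in (0:ℝ)..T, (lam/2) * (deriv q t)^2 + (κ * σ^2/2) * (q t)^2) =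
        (∫ t in (0:ℝ)..T, (lam/2) * (deriv qstar t)^2 + (κ * σ^2/2) * (qstar t)^2) →
        Set.EqOn q qstar (Set.Icc 0 T)) := by
  have hb : 0 < κ * σ ^ 2 := by positivity
  have hγsq : lam * γ ^ 2 = κ * σ ^ 2 := by
    rw [hγ, sq_sqrt (by positivity)]; field_simp
  have hsinh : sinh (γ * T) ≠ 0 :=
    (sinh_pos_iff.mpr (mul_pos (by rw [hγ]; positivity) hT)).ne'
  have hprofile : qstar = fun t => q0 / sinh (γ * T) * sinh (γ * (T - t)) := by
    funext t; rw [hqstar]; ring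
  have hcd : ContDiff ℝ 2 qstar := hprofile ▸ by fun_prop
  have hEL (t : ℝ) : HasDerivAt (fun s => lam * deriv qstar s) (κ * σ ^ 2 * qstar t) t := by
    rw [hprofile, ← hγsq]; exact sinh_profile_euler_lagrange _ γ T lam t
  have hstart : qstar 0 = q0 := by simp [hprofile, hsinh]
  have hend : qstar T = 0 := by simp [hprofile]
  refine ⟨hstart, hend, hcd, fun q hq hq0 hqT => ?_⟩
  change quadraticAction lam (κ * σ ^ 2) T qstar ≤ quadraticAction lam (κ * σ ^ 2) T q ∧
    (quadraticAction lam (κ * σ ^ 2) T q = quadraticAction lam (κ * σ ^ 2) T qstar → _)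
  have hsplit := quadraticAction_eq_add_of_hasDerivAt (hcd.of_le (by norm_num))
    (hq.of_le (by norm_num)) hEL (hq0.trans hstart.symm) (hqT.trans hend.symm)
  have hexcess := quadraticAction_nonneg hlam.le hb.le hT.le (q - qstar)
  refine ⟨by linarith, fun heq t ht => ?_⟩
  have hdiff := eqOn_zero_of_quadraticAction_eq_zero (r := q - qstar) hlam.le hb hT
    ((hq.sub hcd).of_le (by norm_num)) (by linarith) ht
  simpa [sub_eq_zero] using hdiff
end

section
/- Let V(t,q) be the value function of the one-dimensional Almgren-Chriss problem: V(t,q) = min over C² paths on [t,T] with q(t)=q, q(T)=0 of ∫ₜᵀ [(λ/2)v(s)² + (κσ²/2)q(s)²] ds. Then V(t,q) = (λγ/2) q² coth(γ(T−t)), where γ = √(κσ²/λ), and V satisfies the Hamilton-Jacobi equation ∂_t V − (1/(2λ))(∂_q V)² + (κσ²/2) q² = 0 on [0,T) × ℝ (with sign conventions matching V being a cost to be minimized). -/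
/-!
Verification argument. Along any path `Q`, completing the square gives
`d/ds V(s, Q s) = (λ/2) (Q' + γ coth(γ(T - s)) Q)² - L(Q, Q')`, so the action of `Q` on `[t, u]`
is `V(t, Q t) - V(u, Q u)` plus the integral of a square. When `Q T = 0` we have
`Q u = O(T - u)`, while `coth(γ(T - u)) ≤ cosh(γ(T - u)) / (γ(T - u))`, so `V(u, Q u) → 0` as
`u → T⁻`. Hence every admissible path costs at least `V(t, q)`, with equality for
`q sinh(γ(T - s)) / sinh(γ(T - t))`, which follows the feedback `Q' = -γ coth(γ(T - s)) Q`.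
The Hamilton-Jacobi equation is the identity `coth² - 1 = 1 / sinh²`.
-/

open Real Filter Topology Set intervalIntegral MeasureTheory

noncomputable def Real.coth (x : ℝ) : ℝ := cosh x / sinh x

theorem Real.coth_sq_sub_one {x : ℝ} (hx : sinh x ≠ 0) : coth x ^ 2 - 1 = (sinh x ^ 2)⁻¹ := by
  rw [coth, div_pow, cosh_sq]
  field_simp
  ring

theorem Real.hasDerivAt_coth {x : ℝ} (hx : sinh x ≠ 0) :
    HasDerivAt coth (-(sinh x ^ 2)⁻¹) x := by
  refine ((hasDerivAt_cosh x).div (hasDerivAt_sinh x) hx).congr_deriv ?_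
  field_simp
  linear_combination -cosh_sq x

theorem hasDerivAt_const_mul_const_sub (γ T s : ℝ) :
    HasDerivAt (fun u => γ * (T - u)) (-γ) s := by
  simpa using ((hasDerivAt_id s).const_sub T).const_mul γ

theorem sinh_mul_sub_ne_zero {γ T s : ℝ} (hγ : 0 < γ) (hs : s < T) : sinh (γ * (T - s)) ≠ 0 :=
  (sinh_pos_iff.2 (mul_pos hγ (sub_pos.2 hs))).ne'

theorem hasDerivAt_coth_mul_sub {γ T s : ℝ} (hs : sinh (γ * (T - s)) ≠ 0) :
    HasDerivAt (fun u => coth (γ * (T - u))) (γ * (sinh (γ * (T - s)) ^ 2)⁻¹) s := by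
  refine ((hasDerivAt_coth hs).comp s (hasDerivAt_const_mul_const_sub γ T s)).congr_deriv ?_
  ring

noncomputable def acValue (lam γ T t q : ℝ) : ℝ := lam * γ / 2 * q ^ 2 * coth (γ * (T - t))

-- The running cost `(λ/2) v² + (κσ²/2) q²`, with `κσ²` written as `λγ²`.
noncomputable def lagrangian (lam γ : ℝ) (Q : ℝ → ℝ) (s : ℝ) : ℝ :=
  lam / 2 * deriv Q s ^ 2 + lam * γ ^ 2 / 2 * Q s ^ 2

theorem acValue_hjb {lam γ T t : ℝ} (ht : sinh (γ * (T - t)) ≠ 0) (q : ℝ) :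
    deriv (fun s => acValue lam γ T s q) t - deriv (fun y => acValue lam γ T t y) q ^ 2 / (2 * lam)
      + lam * γ ^ 2 / 2 * q ^ 2 = 0 := by
  have htime : deriv (fun s => acValue lam γ T s q) t
      = lam * γ / 2 * q ^ 2 * (γ * (sinh (γ * (T - t)) ^ 2)⁻¹) :=
    ((hasDerivAt_coth_mul_sub ht).const_mul _).deriv
  have hspace : deriv (fun y => acValue lam γ T t y) q
      = lam * γ / 2 * (2 * q) * coth (γ * (T - t)) :=
    (((hasDerivAt_pow 2 q).const_mul (lam * γ / 2)).mul_const
      (coth (γ * (T - t)))).deriv.trans (by ring)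
  rw [htime, hspace, ← coth_sq_sub_one ht]
  field_simp
  ring

theorem hasDerivAt_acValue_along {lam γ T s : ℝ} {Q : ℝ → ℝ} (hQ : DifferentiableAt ℝ Q s)
    (hs : sinh (γ * (T - s)) ≠ 0) :
    HasDerivAt (fun u => acValue lam γ T u (Q u))
      (lam / 2 * (deriv Q s + γ * coth (γ * (T - s)) * Q s) ^ 2 - lagrangian lam γ Q s) s := by
  have hQ2 : HasDerivAt (fun u => Q u ^ 2) (2 * Q s * deriv Q s) s :=
    (hQ.hasDerivAt.fun_pow 2).congr_deriv (by ring)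
  refine ((hQ2.const_mul (lam * γ / 2)).mul (hasDerivAt_coth_mul_sub hs)).congr_deriv ?_
  rw [lagrangian, ← coth_sq_sub_one hs]
  ring

theorem tendsto_acValue_along {lam γ T : ℝ} (hγ : 0 < γ) {Q : ℝ → ℝ}
    (hQ : DifferentiableAt ℝ Q T) (hQT : Q T = 0) :
    Tendsto (fun u => acValue lam γ T u (Q u)) (𝓝[<] T) (𝓝 0) := by
  obtain ⟨c, hc⟩ := hQ.hasDerivAt.isBigO_sub.bound
  have hbound : ∀ᶠ u in 𝓝[<] T,
      Q u ^ 2 * coth (γ * (T - u)) ≤ c ^ 2 / γ * ((T - u) * cosh (γ * (T - u))) := by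
    filter_upwards [nhdsWithin_le_nhds hc, self_mem_nhdsWithin] with u hu huT
    rw [hQT, sub_zero, Real.norm_eq_abs, Real.norm_eq_abs, abs_sub_comm,
      abs_of_pos (sub_pos.2 huT)] at hu
    have hx : 0 < γ * (T - u) := mul_pos hγ (sub_pos.2 huT)
    have hQ2 : Q u ^ 2 ≤ (c * (T - u)) ^ 2 := by
      simpa only [sq_abs] using pow_le_pow_left₀ (abs_nonneg (Q u)) hu 2
    calc Q u ^ 2 * coth (γ * (T - u))
        ≤ (c * (T - u)) ^ 2 * (cosh (γ * (T - u)) / (γ * (T - u))) :=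
          mul_le_mul hQ2
            (div_le_div_of_nonneg_left (cosh_pos _).le hx (self_le_sinh_iff.2 hx.le))
            (by unfold coth; have := sinh_pos_iff.2 hx; positivity) (by positivity)
      _ = c ^ 2 / γ * ((T - u) * cosh (γ * (T - u))) := by
          field_simp
  have hnonneg : ∀ᶠ u in 𝓝[<] T, 0 ≤ Q u ^ 2 * coth (γ * (T - u)) := by
    filter_upwards [self_mem_nhdsWithin] with u huT
    have : 0 < sinh (γ * (T - u)) := sinh_pos_iff.2 (mul_pos hγ (sub_pos.2 huT))
    unfold coth; positivity
  have hlim : Tendsto (fun u => c ^ 2 / γ * ((T - u) * cosh (γ * (T - u)))) (𝓝[<] T) (𝓝 0) := by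
    have : Continuous fun u => c ^ 2 / γ * ((T - u) * cosh (γ * (T - u))) := by fun_prop
    simpa using this.tendsto T |>.mono_left nhdsWithin_le_nhds
  simpa [acValue, mul_assoc] using
    (tendsto_of_tendsto_of_tendsto_of_le_of_le' tendsto_const_nhds hlim hnonneg hbound).const_mul
      (lam * γ / 2)

theorem tendsto_integral_feedback_sq {lam γ T t : ℝ} (hγ : 0 < γ) (htT : t < T) {Q : ℝ → ℝ}
    (hQ : ContDiff ℝ 1 Q) (hQT : Q T = 0) :
    Tendsto (fun u => ∫ s in t..u, lam / 2 * (deriv Q s + γ * coth (γ * (T - s)) * Q s) ^ 2)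
      (𝓝[<] T) (𝓝 ((∫ s in t..T, lagrangian lam γ Q s) - acValue lam γ T t (Q t))) := by
  have hQd := hQ.differentiable one_ne_zero
  have hQc := hQ.continuous
  have hQ' := hQ.continuous_deriv le_rfl
  have hL : Continuous (lagrangian lam γ Q) := by
    unfold lagrangian; fun_prop
  have hcoth : ContinuousOn (fun s => coth (γ * (T - s))) (Iio T) := fun s hs =>
    (hasDerivAt_coth_mul_sub (sinh_mul_sub_ne_zero hγ hs)).continuousAt.continuousWithinAt
  have hD : ContinuousOn
      (fun s => lam / 2 * (deriv Q s + γ * coth (γ * (T - s)) * Q s) ^ 2) (Iio T) := by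
    fun_prop
  have hFTC : ∀ u ∈ Ioo t T,
      ∫ s in t..u, lam / 2 * (deriv Q s + γ * coth (γ * (T - s)) * Q s) ^ 2
        = (∫ s in t..u, lagrangian lam γ Q s)
          + (acValue lam γ T u (Q u) - acValue lam γ T t (Q t)) := by
    rintro u ⟨htu, huT⟩
    have hsub : uIcc t u ⊆ Iio T := by
      rw [uIcc_of_le htu.le]; exact fun s hs => hs.2.trans_lt huT
    have hDint : IntervalIntegrable _ volume t u := (hD.mono hsub).intervalIntegrable
    have hLint := hL.intervalIntegrable (μ := volume) t u
    rw [← integral_eq_sub_of_hasDerivAt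
      (fun s hs => hasDerivAt_acValue_along (hQd s) (sinh_mul_sub_ne_zero hγ (hsub hs)))
      (hDint.sub hLint), integral_sub hDint hLint]
    ring
  have hlim : Tendsto (fun u => (∫ s in t..u, lagrangian lam γ Q s)
        + (acValue lam γ T u (Q u) - acValue lam γ T t (Q t)))
      (𝓝[<] T) (𝓝 ((∫ s in t..T, lagrangian lam γ Q s) + (0 - acValue lam γ T t (Q t)))) :=
    ((continuous_primitive (μ := volume) hL.intervalIntegrable t).tendsto T
      |>.mono_left nhdsWithin_le_nhds).add
      ((tendsto_acValue_along hγ (hQd T) hQT).sub tendsto_const_nhds)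
  rw [zero_sub, ← sub_eq_add_neg] at hlim
  exact hlim.congr' (eventually_of_mem (Ioo_mem_nhdsLT htT) fun u hu => (hFTC u hu).symm)

theorem acValue_le_integral_lagrangian {lam γ T t : ℝ} (hlam : 0 ≤ lam) (hγ : 0 < γ) (htT : t < T)
    {Q : ℝ → ℝ} (hQ : ContDiff ℝ 1 Q) (hQT : Q T = 0) :
    acValue lam γ T t (Q t) ≤ ∫ s in t..T, lagrangian lam γ Q s := by
  have hdefect := ge_of_tendsto (tendsto_integral_feedback_sq hγ htT hQ hQT)
    (eventually_of_mem (Ioo_mem_nhdsLT htT) fun u hu =>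
      integral_nonneg hu.1.le fun s _ => by positivity)
  exact sub_nonneg.1 hdefect

noncomputable def optimalPath (γ T t q s : ℝ) : ℝ := q * sinh (γ * (T - s)) / sinh (γ * (T - t))

section optimalPath

variable {γ T t q : ℝ}

theorem contDiff_optimalPath {n : WithTop ℕ∞} : ContDiff ℝ n (optimalPath γ T t q) := by
  unfold optimalPath; fun_prop

theorem optimalPath_self (ht : sinh (γ * (T - t)) ≠ 0) : optimalPath γ T t q t = q := by
  rw [optimalPath, mul_div_assoc, div_self ht, mul_one]

theorem optimalPath_terminal : optimalPath γ T t q T = 0 := by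
  simp [optimalPath]

theorem optimalPath_feedback {s : ℝ} (hs : sinh (γ * (T - s)) ≠ 0) :
    deriv (optimalPath γ T t q) s + γ * coth (γ * (T - s)) * optimalPath γ T t q s = 0 := by
  have hQ : HasDerivAt (optimalPath γ T t q)
      (q * (cosh (γ * (T - s)) * -γ) / sinh (γ * (T - t))) s :=
    ((hasDerivAt_const_mul_const_sub γ T s).sinh.const_mul q).div_const _
  rw [hQ.deriv, optimalPath, coth]
  field_simp
  ring

theorem integral_lagrangian_optimalPath (lam : ℝ) (hγ : 0 < γ) (htT : t < T) :
    ∫ s in t..T, lagrangian lam γ (optimalPath γ T t q) s = acValue lam γ T t q := by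
  have hdefect := tendsto_integral_feedback_sq (lam := lam) (Q := optimalPath γ T t q) hγ htT
    contDiff_optimalPath optimalPath_terminal
  have hzero : ∀ u ∈ Ioo t T, ∫ s in t..u, lam / 2 * (deriv (optimalPath γ T t q) s
      + γ * coth (γ * (T - s)) * optimalPath γ T t q s) ^ 2 = 0 := by
    rintro u ⟨htu, huT⟩
    rw [integral_congr (g := fun _ => 0) fun s hs => ?_, intervalIntegral.integral_zero]
    rw [uIcc_of_le htu.le] at hs
    simp [optimalPath_feedback (sinh_mul_sub_ne_zero hγ (hs.2.trans_lt huT))]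
  have := tendsto_nhds_unique_of_eventuallyEq hdefect tendsto_const_nhds
    (eventually_of_mem (Ioo_mem_nhdsLT htT) hzero)
  rwa [optimalPath_self (sinh_mul_sub_ne_zero hγ htT), sub_eq_zero] at this

end optimalPath

theorem stmt6_general (lam κ σ T : ℝ) (hlam : 0 < lam) (hκ : 0 < κ) (hσ : 0 < σ)
    (γ : ℝ) (hγ : γ = Real.sqrt (κ * σ^2 / lam))
    (V : ℝ → ℝ → ℝ)
    (hV : ∀ t q, V t q = (lam * γ / 2) * q^2 * (Real.cosh (γ * (T - t)) / Real.sinh (γ * (T - t)))) :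
    (∀ t ∈ Set.Ico (0:ℝ) T, ∀ q : ℝ,
      IsLeast {x : ℝ | ∃ Q : ℝ → ℝ, ContDiff ℝ 2 Q ∧ Q t = q ∧ Q T = 0 ∧
          x = ∫ s in t..T, (lam/2) * (deriv Q s)^2 + (κ * σ^2/2) * (Q s)^2}
        (V t q)) ∧
    (∀ t ∈ Set.Ico (0:ℝ) T, ∀ q : ℝ,
      deriv (fun s => V s q) t - (deriv (fun y => V t y) q)^2 / (2 * lam)
        + (κ * σ^2/2) * q^2 = 0) := by
  have hγpos : 0 < γ := hγ ▸ sqrt_pos.2 (by positivity)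
  have hκσ : κ * σ ^ 2 = lam * γ ^ 2 := by
    rw [hγ, sq_sqrt (by positivity)]; field_simp
  obtain rfl : V = fun t q => acValue lam γ T t q := funext₂ hV
  rw [hκσ]
  refine ⟨fun t ht q => ⟨?_, ?_⟩, fun t ht q => acValue_hjb (sinh_mul_sub_ne_zero hγpos ht.2) q⟩
  · exact ⟨optimalPath γ T t q, contDiff_optimalPath,
      optimalPath_self (sinh_mul_sub_ne_zero hγpos ht.2), optimalPath_terminal,
      (integral_lagrangian_optimalPath lam hγpos ht.2).symm⟩
  · rintro x ⟨Q, hQ, rfl, hQT, rfl⟩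
    exact acValue_le_integral_lagrangian hlam.le hγpos ht.2 (hQ.of_le (by norm_num)) hQT

/-- The 1-D Almgren-Chriss value function
`V(t,q) = min ∫ₜᵀ [(λ/2)v² + (κσ²/2)q²]` over C² paths from `q` at `t` to `0` at `T`
equals `(λγ/2) q² coth(γ(T−t))` with `γ = √(κσ²/λ)` (and the min is attained), and `V`
satisfies the Hamilton-Jacobi equation `∂ₜV − (∂_qV)²/(2λ) + (κσ²/2)q² = 0` on `[0,T) × ℝ`. -/
theorem stmt6 (lam κ σ T : ℝ) (hlam : 0 < lam) (hκ : 0 < κ) (hσ : 0 < σ) (hT : 0 < T)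
    (γ : ℝ) (hγ : γ = Real.sqrt (κ * σ^2 / lam))
    (V : ℝ → ℝ → ℝ)
    (hV : ∀ t q, V t q = (lam * γ / 2) * q^2 * (Real.cosh (γ * (T - t)) / Real.sinh (γ * (T - t)))) :
    (∀ t ∈ Set.Ico (0:ℝ) T, ∀ q : ℝ,
      IsLeast {x : ℝ | ∃ Q : ℝ → ℝ, ContDiff ℝ 2 Q ∧ Q t = q ∧ Q T = 0 ∧
          x = ∫ s in t..T, (lam/2) * (deriv Q s)^2 + (κ * σ^2/2) * (Q s)^2}
        (V t q)) ∧
    (∀ t ∈ Set.Ico (0:ℝ) T, ∀ q : ℝ,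
      deriv (fun s => V s q) t - (deriv (fun y => V t y) q)^2 / (2 * lam)
        + (κ * σ^2/2) * q^2 = 0) :=
  stmt6_general lam κ σ T hlam hκ hσ γ hγ V hV
end
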